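/- Let λ ≥ 0 be a real number and let R(x,y,z) = x⁶ + y⁶ + z⁶ − (x⁴y² + x²y⁴ + x⁴z² + x²z⁴ + y⁴z² + y²z⁴) + 3x²y²z² be the Robinson form. Then (x² + y² + z²)·R(x, λy, λz) is a sum of squares of polynomials if and only if λ ≤ 2. -/

import Mathlib

open MvPolynomial

/-- A real polynomial is a sum of squares (sos) if it equals a finite sum of squares
of real polynomials. -/
def IsSos {n : ℕ} (p : MvPolynomial (Fin n) ℝ) : Prop :=
  ∃ (k : ℕ) (g : Fin k → MvPolynomial (Fin n) ℝ), p = ∑ i, g i ^ 2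

/-- A real polynomial is positive semidefinite (psd) if it takes nonnegative values
at every real point. -/
def Psd {n : ℕ} (p : MvPolynomial (Fin n) ℝ) : Prop :=
  ∀ x : Fin n → ℝ, 0 ≤ eval x p

/-- The Robinson form R(x,y,z) = x⁶+y⁶+z⁶ − (x⁴y²+x²y⁴+x⁴z²+x²z⁴+y⁴z²+y²z⁴) + 3x²y²z². -/
noncomputable def Robinson : MvPolynomial (Fin 3) ℝ :=
  X 0 ^ 6 + X 1 ^ 6 + X 2 ^ 6
    - (X 0 ^ 4 * X 1 ^ 2 + X 0 ^ 2 * X 1 ^ 4 + X 0 ^ 4 * X 2 ^ 2 + X 0 ^ 2 * X 2 ^ 4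
        + X 1 ^ 4 * X 2 ^ 2 + X 1 ^ 2 * X 2 ^ 4)
    + 3 * (X 0 ^ 2 * X 1 ^ 2 * X 2 ^ 2)

/-! ### Auxiliary lemmas -/

/-- If a finite sum of squares of real univariate polynomials equals `c·T⁸`, then every
summand is a scalar multiple of `T⁴`, and the squares of those scalars sum to `c`. -/
lemma sumsq_poly_structure {k : ℕ} (f : Fin k → Polynomial ℝ) (c : ℝ)
    (h : ∑ i, (f i) ^ 2 = Polynomial.C c * Polynomial.X ^ 8) :
    ∃ γ : Fin k → ℝ, (∀ i, f i = Polynomial.C (γ i) * Polynomial.X ^ 4) ∧ ∑ i, (γ i) ^ 2 = c := by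
  have hsq : ∀ (q : Polynomial ℝ) (n : ℕ),
      (q ^ 2).coeff n = ∑ j ∈ Finset.range (n + 1), q.coeff j * q.coeff (n - j) := by
    intro q n
    rw [sq, Polynomial.coeff_mul, Finset.Nat.sum_antidiagonal_eq_sum_range_succ_mk]
  -- single-survivor computation
  have single : ∀ (q : Polynomial ℝ) (m : ℕ),
      (∀ j, j ≤ 2 * m → j ≠ m → (q.coeff j = 0 ∨ q.coeff (2 * m - j) = 0)) →
      (q ^ 2).coeff (2 * m) = q.coeff m ^ 2 := by
    intro q m hj
    rw [hsq]
    rw [Finset.sum_eq_single m]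
    · simp only [show 2 * m - m = m from by omega]; ring
    · intro j hjm hne
      rcases hj j (by simpa using Nat.lt_succ_iff.mp (Finset.mem_range.mp hjm)) hne with h' | h'
      · rw [h', zero_mul]
      · rw [h', mul_zero]
    · intro hm; exact absurd (Finset.mem_range.mpr (by omega)) hm
  have hc : ∀ n : ℕ, ∑ i, ((f i) ^ 2).coeff n = (Polynomial.C c * Polynomial.X ^ 8).coeff n := by
    intro n; rw [← Polynomial.finset_sum_coeff, h]
  have sumsq_zero : ∀ (v : Fin k → ℝ), ∑ i, (v i) ^ 2 = 0 → ∀ i, v i = 0 := by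
    intro v hv i
    have := (Finset.sum_eq_zero_iff_of_nonneg (fun j _ => sq_nonneg (v j))).mp hv i (Finset.mem_univ i)
    exact pow_eq_zero_iff (by norm_num) |>.mp this
  -- low coefficients: coeff m = 0 for m < 4, by strong induction on m
  have low : ∀ m, m < 4 → ∀ i, (f i).coeff m = 0 := by
    intro m
    induction m using Nat.strong_induction_on with
    | _ m ih =>
      intro hm4
      apply sumsq_zero
      have e := hc (2 * m)
      rw [Finset.sum_congr rfl (fun i _ => single (f i) m (fun j hj2 hne => by
        rcases lt_or_gt_of_ne hne with hlt | hgt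
        · exact Or.inl (ih j hlt (by omega) i)
        · exact Or.inr (ih (2 * m - j) (by omega) (by omega) i))) ] at e
      rw [Polynomial.coeff_C_mul, Polynomial.coeff_X_pow] at e
      simpa [show ¬ (2 * m = 8) by omega] using e
  -- high: natDegree ≤ 4
  have down : ∀ n, 4 ≤ n → (∀ i, (f i).natDegree ≤ n + 1) → ∀ i, (f i).natDegree ≤ n := by
    intro n hn hb i
    have hco : ∀ i, (f i).coeff (n + 1) = 0 := by
      apply sumsq_zero
      have e := hc (2 * (n + 1))
      rw [Finset.sum_congr rfl (fun i _ => single (f i) (n + 1) (fun j hj2 hne => by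
        rcases lt_or_gt_of_ne hne with hlt | hgt
        · exact Or.inr (Polynomial.coeff_eq_zero_of_natDegree_lt (lt_of_le_of_lt (hb i) (by omega)))
        · exact Or.inl (Polynomial.coeff_eq_zero_of_natDegree_lt (lt_of_le_of_lt (hb i) (by omega))))) ] at e
      rw [Polynomial.coeff_C_mul, Polynomial.coeff_X_pow] at e
      simpa [show ¬ (2 * (n + 1) = 8) by omega] using e
    refine Polynomial.natDegree_le_iff_coeff_eq_zero.mpr (fun m hm => ?_)
    rcases Nat.eq_or_lt_of_le (Nat.succ_le_of_lt hm) with he | hlt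
    · rw [← he]; exact hco i
    · exact Polynomial.coeff_eq_zero_of_natDegree_lt (lt_of_le_of_lt (hb i) hlt)
  have hdeg : ∀ i, (f i).natDegree ≤ 4 := by
    have key : ∀ j, (∀ i, (f i).natDegree ≤ 4 + j) → ∀ i, (f i).natDegree ≤ 4 := by
      intro j
      induction j with
      | zero => exact fun hb => hb
      | succ j ih => exact fun hb => ih (down (4 + j) (by omega) (by
          intro i; have := hb i; omega))
    exact key (Finset.univ.sup fun i => (f i).natDegree)
      (fun i => le_trans (Finset.le_sup (f := fun i => (f i).natDegree) (Finset.mem_univ i))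
        (Nat.le_add_left _ 4))
  -- structure
  refine ⟨fun i => (f i).coeff 4, fun i => ?_, ?_⟩
  · ext n
    rw [Polynomial.coeff_C_mul, Polynomial.coeff_X_pow]
    rcases lt_trichotomy n 4 with hlt | heq | hgt
    · rw [low n hlt i, if_neg (by omega), mul_zero]
    · rw [heq, if_pos rfl, mul_one]
    · rw [Polynomial.coeff_eq_zero_of_natDegree_lt (lt_of_le_of_lt (hdeg i) hgt),
        if_neg (by omega), mul_zero]
  · have e := hc 8
    rw [Finset.sum_congr rfl (fun i _ => single (f i) 4 (fun j hj2 hne => by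
      rcases lt_or_gt_of_ne hne with hlt | hgt
      · exact Or.inl (low j hlt i)
      · exact Or.inl (Polynomial.coeff_eq_zero_of_natDegree_lt (lt_of_le_of_lt (hdeg i) hgt)))) ] at e
    rw [Polynomial.coeff_C_mul, Polynomial.coeff_X_pow] at e
    simpa using e

/-- The degree-4 coefficient of the restriction of a ternary polynomial to the line
`t ↦ (u·t, v·t, w·t)`. -/
noncomputable def gam (u v w : ℝ) (g : MvPolynomial (Fin 3) ℝ) : ℝ :=
  (aeval ![Polynomial.C u * Polynomial.X, Polynomial.C v * Polynomial.X,
    Polynomial.C w * Polynomial.X] g).coeff 4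

lemma gam_monomial (u v w : ℝ) (s : Fin 3 →₀ ℕ) (a : ℝ) :
    gam u v w (monomial s a) =
      if s 0 + s 1 + s 2 = 4 then a * (u ^ s 0 * v ^ s 1 * w ^ s 2) else 0 := by
  have key : (aeval ![Polynomial.C u * Polynomial.X, Polynomial.C v * Polynomial.X,
      Polynomial.C w * Polynomial.X] (monomial s a)) =
      Polynomial.C (a * (u ^ s 0 * v ^ s 1 * w ^ s 2)) * Polynomial.X ^ (s 0 + s 1 + s 2) := by
    rw [MvPolynomial.aeval_monomial, Finsupp.prod_fintype _ _ (fun i => pow_zero _),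
      Fin.prod_univ_three]
    simp only [Matrix.cons_val_zero, Matrix.cons_val_one, Matrix.head_cons, Matrix.cons_val_two,
      Matrix.tail_cons, Polynomial.algebraMap_eq, map_mul, map_pow, mul_pow, pow_add]
    ring
  unfold gam
  rw [key, Polynomial.coeff_C_mul, Polynomial.coeff_X_pow]
  split_ifs with h1 h2 h2
  · ring
  · omega
  · omega
  · ring

lemma gam_add (u v w : ℝ) (p q : MvPolynomial (Fin 3) ℝ) :
    gam u v w (p + q) = gam u v w p + gam u v w q := by
  simp [gam]

set_option maxHeartbeats 2000000 in
/-- The key quadrature identity: a specific linear combination of the degree-4 restriction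
coefficients at thirteen points vanishes for every ternary polynomial. -/
lemma quad (lam : ℝ) (g : MvPolynomial (Fin 3) ℝ) :
    lam ^ 4 * gam 1 0 0 g + gam 0 1 0 g + gam 0 0 1 g
      + (1/4) * (gam lam 1 1 g + gam lam 1 (-1) g + gam lam (-1) 1 g + gam lam (-1) (-1) g)
      = (1/2) * (gam 0 1 1 g + gam 0 1 (-1) g)
      + (1/2) * (gam lam 1 0 g + gam lam (-1) 0 g + gam lam 0 1 g + gam lam 0 (-1) g) := by
  induction g using MvPolynomial.induction_on' with
  | add p q hp hq =>
    simp only [gam_add]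
    linarith
  | monomial s a =>
    simp only [gam_monomial]
    by_cases h4 : s 0 + s 1 + s 2 = 4
    · simp only [if_pos h4]
      obtain ⟨n0, n1, n2, h0', h1', h2'⟩ : ∃ n0 n1 n2, s 0 = n0 ∧ s 1 = n1 ∧ s 2 = n2 :=
        ⟨_, _, _, rfl, rfl, rfl⟩
      rw [h0', h1', h2'] at h4 ⊢
      have hb0 : n0 ≤ 4 := by omega
      have hb1 : n1 ≤ 4 := by omega
      have hb2 : n2 ≤ 4 := by omega
      have hb0' : 0 ≤ n0 := by omega
      have hb1' : 0 ≤ n1 := by omega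
      have hb2' : 0 ≤ n2 := by omega
      interval_cases n0 <;> interval_cases n1 <;> interval_cases n2 <;>
        (try (exfalso; omega)) <;> norm_num <;> ring
    · simp [if_neg h4]

/-- Sum of squares of `gam` values from a sum-of-squares identity. -/
lemma gam_sq_sum {k : ℕ} (g : Fin k → MvPolynomial (Fin 3) ℝ) (u v w c : ℝ)
    (h : (aeval ![Polynomial.C u * Polynomial.X, Polynomial.C v * Polynomial.X,
        Polynomial.C w * Polynomial.X] (∑ i, g i ^ 2)) = Polynomial.C c * Polynomial.X ^ 8) :
    ∑ i, (gam u v w (g i)) ^ 2 = c := by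
  rw [map_sum] at h
  simp only [map_pow] at h
  obtain ⟨γ, hform, hsum⟩ := sumsq_poly_structure _ c h
  rw [Finset.sum_congr rfl (fun i _ => by
    rw [show gam u v w (g i) = γ i from by
      unfold gam; rw [hform i]
      simp [Polynomial.coeff_C_mul, Polynomial.coeff_X_pow]])]
  exact hsum

set_option maxHeartbeats 4000000 in
/-- For λ ≥ 0, the form (x²+y²+z²)·R(x, λy, λz) is sos if and only if λ ≤ 2. -/
theorem scaled_robinson_sos_iff (lam : ℝ) (hlam : 0 ≤ lam) :
    IsSos ((X 0 ^ 2 + X 1 ^ 2 + X 2 ^ 2) *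
        ((aeval ![X 0, C lam * X 1, C lam * X 2] Robinson : MvPolynomial (Fin 3) ℝ))) ↔ lam ≤ 2 := by
  have hp : (X 0 ^ 2 + X 1 ^ 2 + X 2 ^ 2) *
      ((aeval ![X 0, C lam * X 1, C lam * X 2] Robinson : MvPolynomial (Fin 3) ℝ)) =
      (X 0 ^ 2 + X 1 ^ 2 + X 2 ^ 2) *
        (X 0 ^ 6 + (C lam) ^ 6 * X 1 ^ 6 + (C lam) ^ 6 * X 2 ^ 6
          - ((C lam) ^ 2 * X 0 ^ 4 * X 1 ^ 2 + (C lam) ^ 4 * X 0 ^ 2 * X 1 ^ 4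
              + (C lam) ^ 2 * X 0 ^ 4 * X 2 ^ 2 + (C lam) ^ 4 * X 0 ^ 2 * X 2 ^ 4
              + (C lam) ^ 6 * X 1 ^ 4 * X 2 ^ 2 + (C lam) ^ 6 * X 1 ^ 2 * X 2 ^ 4)
          + 3 * ((C lam) ^ 4 * X 0 ^ 2 * X 1 ^ 2 * X 2 ^ 2)) := by
    simp only [Robinson, map_add, map_sub, map_mul, map_pow, aeval_X, map_ofNat,
      Matrix.cons_val_zero, Matrix.cons_val_one, Matrix.head_cons, Matrix.cons_val_two,
      Matrix.tail_cons]
    ring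
  constructor
  · -- hard direction: sos → λ ≤ 2
    rintro ⟨k, g, hg⟩
    have philem : ∀ u v w : ℝ,
        (aeval ![Polynomial.C u * Polynomial.X, Polynomial.C v * Polynomial.X,
          Polynomial.C w * Polynomial.X] (∑ i, g i ^ 2)) =
        Polynomial.C ((u^2 + v^2 + w^2) * (u^6 + lam^6 * v^6 + lam^6 * w^6
          - (lam^2 * u^4 * v^2 + lam^4 * u^2 * v^4 + lam^2 * u^4 * w^2 + lam^4 * u^2 * w^4
             + lam^6 * v^4 * w^2 + lam^6 * v^2 * w^4) + 3 * (lam^4 * u^2 * v^2 * w^2)))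
          * Polynomial.X ^ 8 := by
      intro u v w
      rw [← hg, hp]
      simp only [map_add, map_sub, map_mul, map_pow, aeval_X, aeval_C, map_ofNat,
        Matrix.cons_val_zero, Matrix.cons_val_one, Matrix.head_cons, Matrix.cons_val_two,
        Matrix.tail_cons, Polynomial.algebraMap_eq]
      ring
    have main : ∀ u v w : ℝ, ∑ i, (gam u v w (g i)) ^ 2 =
        (u^2 + v^2 + w^2) * (u^6 + lam^6 * v^6 + lam^6 * w^6
          - (lam^2 * u^4 * v^2 + lam^4 * u^2 * v^4 + lam^2 * u^4 * w^2 + lam^4 * u^2 * w^4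
             + lam^6 * v^4 * w^2 + lam^6 * v^2 * w^4) + 3 * (lam^4 * u^2 * v^2 * w^2)) :=
      fun u v w => gam_sq_sum g u v w _ (philem u v w)
    -- the ten zeros
    have zero_at : ∀ u v w : ℝ,
        ((u^2 + v^2 + w^2) * (u^6 + lam^6 * v^6 + lam^6 * w^6
          - (lam^2 * u^4 * v^2 + lam^4 * u^2 * v^4 + lam^2 * u^4 * w^2 + lam^4 * u^2 * w^4
             + lam^6 * v^4 * w^2 + lam^6 * v^2 * w^4) + 3 * (lam^4 * u^2 * v^2 * w^2)) = 0) →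
        ∀ i, gam u v w (g i) = 0 := by
      intro u v w hv i
      have h0 : ∑ i, (gam u v w (g i)) ^ 2 = 0 := by rw [main u v w, hv]
      have := (Finset.sum_eq_zero_iff_of_nonneg
        (fun j _ => sq_nonneg (gam u v w (g j)))).mp h0 i (Finset.mem_univ i)
      exact pow_eq_zero_iff (by norm_num) |>.mp this
    have z1 : ∀ i, gam 0 1 1 (g i) = 0 := zero_at 0 1 1 (by ring)
    have z2 : ∀ i, gam 0 1 (-1) (g i) = 0 := zero_at 0 1 (-1) (by ring)
    have z3 : ∀ i, gam lam 1 1 (g i) = 0 := zero_at lam 1 1 (by ring)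
    have z4 : ∀ i, gam lam 1 (-1) (g i) = 0 := zero_at lam 1 (-1) (by ring)
    have z5 : ∀ i, gam lam (-1) 1 (g i) = 0 := zero_at lam (-1) 1 (by ring)
    have z6 : ∀ i, gam lam (-1) (-1) (g i) = 0 := zero_at lam (-1) (-1) (by ring)
    have z7 : ∀ i, gam lam 1 0 (g i) = 0 := zero_at lam 1 0 (by ring)
    have z8 : ∀ i, gam lam (-1) 0 (g i) = 0 := zero_at lam (-1) 0 (by ring)
    have z9 : ∀ i, gam lam 0 1 (g i) = 0 := zero_at lam 0 1 (by ring)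
    have z10 : ∀ i, gam lam 0 (-1) (g i) = 0 := zero_at lam 0 (-1) (by ring)
    -- the linear relation per summand
    have hrel : ∀ i, lam ^ 4 * gam 1 0 0 (g i) + gam 0 1 0 (g i) + gam 0 0 1 (g i) = 0 := by
      intro i
      have := quad lam (g i)
      rw [z1 i, z2 i, z3 i, z4 i, z5 i, z6 i, z7 i, z8 i, z9 i, z10 i] at this
      linarith
    -- sums of squares at the three unit points
    have hA : ∑ i, (gam 1 0 0 (g i)) ^ 2 = 1 := by
      have := main 1 0 0; norm_num at this; exact this
    have hE : ∑ i, (gam 0 1 0 (g i)) ^ 2 = lam ^ 6 := by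
      have := main 0 1 0; norm_num at this; exact this
    have hF : ∑ i, (gam 0 0 1 (g i)) ^ 2 = lam ^ 6 := by
      have := main 0 0 1; norm_num at this; exact this
    -- combine
    have hper : ∀ i, lam ^ 8 * (gam 1 0 0 (g i)) ^ 2 ≤
        2 * (gam 0 1 0 (g i)) ^ 2 + 2 * (gam 0 0 1 (g i)) ^ 2 := by
      intro i
      have h2 : lam ^ 8 * (gam 1 0 0 (g i)) ^ 2
          = (gam 0 1 0 (g i) + gam 0 0 1 (g i)) ^ 2 := by
        have h3 : lam ^ 4 * gam 1 0 0 (g i) = -(gam 0 1 0 (g i) + gam 0 0 1 (g i)) := by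
          linarith [hrel i]
        calc lam ^ 8 * (gam 1 0 0 (g i)) ^ 2 = (lam ^ 4 * gam 1 0 0 (g i)) ^ 2 := by ring
        _ = _ := by rw [h3]; ring
      rw [h2]
      nlinarith [sq_nonneg (gam 0 1 0 (g i) - gam 0 0 1 (g i))]
    have hsum : lam ^ 8 ≤ 4 * lam ^ 6 := by
      have h1 : ∑ i, lam ^ 8 * (gam 1 0 0 (g i)) ^ 2 ≤
          ∑ i, (2 * (gam 0 1 0 (g i)) ^ 2 + 2 * (gam 0 0 1 (g i)) ^ 2) :=
        Finset.sum_le_sum (fun i _ => hper i)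
      rw [← Finset.mul_sum, hA, Finset.sum_add_distrib, ← Finset.mul_sum, ← Finset.mul_sum,
        hE, hF] at h1
      linarith
    by_contra hc
    push_neg at hc
    have h6 : (0:ℝ) < lam ^ 6 := pow_pos (by linarith) 6
    nlinarith [mul_pos h6 (show (0:ℝ) < lam ^ 2 - 4 by nlinarith)]
  · -- easy direction: λ ≤ 2 → sos
    intro hle
    set s : ℝ := Real.sqrt (lam ^ 2 * (4 - lam ^ 2)) with hs_def
    have hs : s ^ 2 = lam ^ 2 * (4 - lam ^ 2) :=
      Real.sq_sqrt (mul_nonneg (sq_nonneg lam)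
        (by nlinarith [mul_self_le_mul_self hlam hle]))
    refine ⟨5, ![
      C (1/2 : ℝ) * (2 * X 0 ^ 4 - (C lam) ^ 2 * X 0 ^ 2 * X 1 ^ 2 - (C lam) ^ 2 * X 0 ^ 2 * X 2 ^ 2
        - (C lam) ^ 4 * X 1 ^ 4 - (C lam) ^ 4 * X 2 ^ 4 + 2 * (C lam) ^ 4 * X 1 ^ 2 * X 2 ^ 2),
      C (1/2 : ℝ) * C s * (X 0 ^ 2 * X 1 ^ 2 - X 0 ^ 2 * X 2 ^ 2 - (C lam) ^ 2 * X 1 ^ 4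
        + (C lam) ^ 2 * X 2 ^ 4),
      X 0 ^ 3 * X 1 - (C lam) ^ 2 * X 0 * X 1 ^ 3,
      X 0 ^ 3 * X 2 - (C lam) ^ 2 * X 0 * X 2 ^ 3,
      (C lam) ^ 4 * X 1 ^ 3 * X 2 - (C lam) ^ 4 * X 1 * X 2 ^ 3], ?_⟩
    have h4ne : (4 : MvPolynomial (Fin 3) ℝ) ≠ 0 := by norm_num
    refine mul_left_cancel₀ h4ne ?_
    rw [hp, Fin.sum_univ_five]
    simp only [Matrix.cons_val_zero, Matrix.cons_val_one, Matrix.head_cons, Matrix.cons_val_two,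
      Matrix.tail_cons, Matrix.cons_val_three, Matrix.cons_val_four, Matrix.head_fin_const]
    have hfour : (4 : MvPolynomial (Fin 3) ℝ) * (C (1/2 : ℝ)) ^ 2 = 1 := by
      rw [show (4 : MvPolynomial (Fin 3) ℝ) = C (4:ℝ) from (map_ofNat _ 4).symm, ← map_pow,
        ← map_mul]
      norm_num
    have hCs : (C s : MvPolynomial (Fin 3) ℝ) ^ 2 = (C lam) ^ 2 * (4 - (C lam) ^ 2) := by
      rw [← map_pow, hs, map_mul, map_pow, map_sub, map_pow,
        show ((C (4:ℝ)) : MvPolynomial (Fin 3) ℝ) = 4 from map_ofNat _ 4]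
    linear_combination (-((2 * X 0 ^ 4 - (C lam) ^ 2 * X 0 ^ 2 * X 1 ^ 2 - (C lam) ^ 2 * X 0 ^ 2 * X 2 ^ 2 - (C lam) ^ 4 * X 1 ^ 4 - (C lam) ^ 4 * X 2 ^ 4 + 2 * (C lam) ^ 4 * X 1 ^ 2 * X 2 ^ 2) ^ 2 + (C lam) ^ 2 * (4 - (C lam) ^ 2) * (X 0 ^ 2 * X 1 ^ 2 - X 0 ^ 2 * X 2 ^ 2 - (C lam) ^ 2 * X 1 ^ 4 + (C lam) ^ 2 * X 2 ^ 4) ^ 2)) * hfour + (-(4 * ((C (1/2 : ℝ)) : MvPolynomial (Fin 3) ℝ) ^ 2 * (X 0 ^ 2 * X 1 ^ 2 - X 0 ^ 2 * X 2 ^ 2 - (C lam) ^ 2 * X 1 ^ 4 + (C lam) ^ 2 * X 2 ^ 4) ^ 2)) * hCs
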